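/- Let d ≥ 3 and m an admissible Nakajima parameter matrix. Let τ := pos(P_m^{(d)}) ⊂ ℝ^d be the cone over the Nakajima polytope. Then the dual cone τ^∨ ⊂ (ℝ^d)^∨ equals pos(L), where L := {e_1^∨} ∪ { e_k^∨, m_{k-1} - e_k^∨ : 2 ≤ k ≤ d }. -/

import Mathlib

/-- Replace the `k`-th coordinate of `x` by `0`. -/
def coordZero {d : ℕ} (x : Fin d → ℝ) (k : ℕ) : Fin d → ℝ :=
  fun j => if (j : ℕ) = k then 0 else x j

/-- The `k`-th (0-based) coordinate of `x`, or `0` if out of range. -/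
def coordN {d : ℕ} (x : Fin d → ℝ) (k : ℕ) : ℝ :=
  if h : k < d then x ⟨k, h⟩ else 0

/-- The pairing `⟨m_i, x⟩ = ∑_{l=1}^{i} m_{i,l} x_l` of the row `m_i` with the
first `i` coordinates of `x`. -/
def nakPairing {d : ℕ} (m : ℕ → ℕ → ℤ) (i : ℕ) (x : Fin d → ℝ) : ℝ :=
  ∑ j ∈ Finset.univ.filter (fun j : Fin d => (j : ℕ) < i), (m i ((j : ℕ) + 1) : ℝ) * x j

/-- The inductively defined Nakajima polytopes `P_m^{(i)} ⊂ ℝ^d`: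
`P_m^{(1)} = {e₁}` and
`P_m^{(i)} = { (x', x_i, 0,…,0) : (x',0,…,0) ∈ P_m^{(i-1)}, 0 ≤ x_i ≤ ⟨m_{i-1}, x'⟩ }`. -/
def nakP (d : ℕ) (m : ℕ → ℕ → ℤ) : ℕ → Set (Fin d → ℝ)
  | 0 => ∅
  | 1 => {fun j : Fin d => if (j : ℕ) = 0 then (1 : ℝ) else 0}
  | i + 2 =>
      { x | coordZero x (i + 1) ∈ nakP d m (i + 1) ∧
        0 ≤ coordN x (i + 1) ∧ coordN x (i + 1) ≤ nakPairing m (i + 1) x }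

/-- Admissibility of the parameter matrix `m`:
`⟨m_{i-1}, x⟩ ≥ 0` for all `x ∈ P_m^{(i-1)}`, `2 ≤ i ≤ d`. -/
def NakAdmissibleR (d : ℕ) (m : ℕ → ℕ → ℤ) : Prop :=
  ∀ i, 2 ≤ i → i ≤ d → ∀ x ∈ nakP d m (i - 1), 0 ≤ nakPairing m (i - 1) x

/-- The cone `τ = pos(P_m^{(d)})` over the Nakajima polytope. -/
def nakCone (d : ℕ) (m : ℕ → ℕ → ℤ) : Set (Fin d → ℝ) :=
  { y | ∃ (r : ℝ) (x : Fin d → ℝ), 0 ≤ r ∧ x ∈ nakP d m d ∧ y = r • x }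

/-- The list `L = {e₁^∨} ∪ {e_k^∨, m_{k-1} - e_k^∨ : 2 ≤ k ≤ d}` of `2d-1` vectors:
for `i < d` the vector `e_{i+1}^∨`, and for `i = d + l` the vector `m_{l+1} - e_{l+2}^∨`. -/
def LvecZ (d : ℕ) (m : ℕ → ℕ → ℤ) (i : Fin (2 * d - 1)) (j : Fin d) : ℤ :=
  if (i : ℕ) < d then (if (j : ℕ) = (i : ℕ) then 1 else 0)
  else m ((i : ℕ) - d + 1) ((j : ℕ) + 1) - (if (j : ℕ) = (i : ℕ) - d + 1 then 1 else 0)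

/-!
Points of `P_m^{(d)}` have nonnegative coordinates and satisfy `x_k ≤ ⟨m_{k-1}, x⟩`, which is
`pos(L) ⊆ τ^∨`. Conversely, let `y` vanish beyond the first `k` coordinates and be nonnegative on
`P_m^{(k)}`. With `c = max(-y_k, 0)`, the form `y' = y - y_k e_k^∨ - c m_{k-1}` vanishes beyond
the first `k - 1` coordinates, and it is nonnegative on `P_m^{(k-1)}`: a point `x` there lifts to
`(x, v) ∈ P_m^{(k)}` with `v = 0` or `v = ⟨m_{k-1}, x⟩` (nonnegative by admissibility), chosen so
that `⟨y, (x, v)⟩ = ⟨y', x⟩`. As `y - y' = max(y_k, 0) e_k^∨ + c (m_{k-1} - e_k^∨)`, induction on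
`k` puts `y` in `pos(L)`.
-/

open Matrix

theorem mem_hull_range_iff_exists_nonneg {ι κ : Type*} [Fintype ι] (v : ι → κ → ℝ)
    (y : κ → ℝ) :
    y ∈ PointedCone.hull ℝ (Set.range v) ↔
      ∃ a : ι → ℝ, (∀ i, 0 ≤ a i) ∧ ∀ j, y j = ∑ i, a i * v i j := by
  rw [Submodule.mem_span_range_iff_exists_fun]
  constructor
  · rintro ⟨c, rfl⟩
    exact ⟨fun i => c i, fun i => (c i).2, fun j => by simp [Finset.sum_apply, ← Nonneg.coe_smul]⟩
  · rintro ⟨a, ha, hy⟩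
    refine ⟨fun i => ⟨a i, ha i⟩, funext fun j => ?_⟩
    simp [Finset.sum_apply, hy j, Nonneg.mk_smul]

section Nakajima

variable {d : ℕ} {m : ℕ → ℕ → ℤ}

lemma coordZero_apply_of_ne (x : Fin d → ℝ) {k : ℕ} {j : Fin d} (h : (j : ℕ) ≠ k) :
    coordZero x k j = x j :=
  if_neg h

lemma coordN_eq_apply (x : Fin d → ℝ) {k : ℕ} {j : Fin d} (h : (j : ℕ) = k) :
    coordN x k = x j := by
  subst h
  exact dif_pos j.isLt

lemma nakPairing_congr {i : ℕ} {x x' : Fin d → ℝ} (h : ∀ j : Fin d, (j : ℕ) < i → x j = x' j) :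
    nakPairing m i x = nakPairing m i x' :=
  Finset.sum_congr rfl fun j hj => by rw [h j (Finset.mem_filter.mp hj).2]

variable (d m) in
def nakRow (i : ℕ) : Fin d → ℝ := fun j => m i (j + 1)

lemma nakRow_dotProduct (hm : ∀ i j, i < j → m i j = 0) (i : ℕ) (x : Fin d → ℝ) :
    nakRow d m i ⬝ᵥ x = nakPairing m i x := by
  rw [nakPairing, Finset.sum_filter]
  refine Finset.sum_congr rfl fun j _ => ?_
  split_ifs with h
  · rfl
  · simp [nakRow, hm i (j + 1) (by omega)]

lemma nakP_one (h : 0 < d) : nakP d m 1 = {Pi.single ⟨0, h⟩ 1} := by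
  ext x
  simp only [nakP, Set.mem_singleton_iff]
  constructor <;> rintro rfl <;> funext j <;> simp [Pi.single_apply, Fin.ext_iff]

lemma apply_eq_zero_of_mem_nakP :
    ∀ {n : ℕ} {x : Fin d → ℝ}, x ∈ nakP d m n → ∀ j : Fin d, n ≤ j → x j = 0
  | 1, _, rfl, j, hj => if_neg (by omega)
  | i + 2, x, hx, j, hj => by
    rw [← coordZero_apply_of_ne x (k := i + 1) (by omega)]
    exact apply_eq_zero_of_mem_nakP hx.1 j (by omega)

lemma nonneg_of_mem_nakP : ∀ {n : ℕ} {x : Fin d → ℝ}, x ∈ nakP d m n → ∀ j, 0 ≤ x j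
  | 1, _, rfl, j => by dsimp only; split_ifs <;> norm_num
  | i + 2, x, hx, j => by
    by_cases h : (j : ℕ) = i + 1
    · rw [← coordN_eq_apply x h]
      exact hx.2.1
    · rw [← coordZero_apply_of_ne x h]
      exact nonneg_of_mem_nakP hx.1 j

lemma le_nakPairing_of_mem_nakP : ∀ {n : ℕ} {x : Fin d → ℝ}, x ∈ nakP d m n →
    ∀ p : Fin d, 1 ≤ (p : ℕ) → (p : ℕ) < n → x p ≤ nakPairing m p x
  | 1, _, _, p, h1, h2 => by omega
  | i + 2, x, hx, p, h1, h2 => by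
    by_cases h : (p : ℕ) = i + 1
    · rw [← coordN_eq_apply x h, h]
      exact hx.2.2
    · rw [← coordZero_apply_of_ne x h,
        ← nakPairing_congr fun j hj => coordZero_apply_of_ne x (k := i + 1) (by omega)]
      exact le_nakPairing_of_mem_nakP hx.1 p h1 (by omega)

lemma add_single_mem_nakP {i : ℕ} (hi : i + 1 < d) {x : Fin d → ℝ} (hx : x ∈ nakP d m (i + 1))
    {v : ℝ} (hv₀ : 0 ≤ v) (hv : v ≤ nakPairing m (i + 1) x) :
    x + Pi.single ⟨i + 1, hi⟩ v ∈ nakP d m (i + 2) := by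
  have hxk : x ⟨i + 1, hi⟩ = 0 := apply_eq_zero_of_mem_nakP hx _ le_rfl
  have hcoord : coordN (x + Pi.single ⟨i + 1, hi⟩ v) (i + 1) = v := by
    simp [coordN_eq_apply _ (j := ⟨i + 1, hi⟩) rfl, hxk]
  refine ⟨?_, by rwa [hcoord], ?_⟩
  · convert hx using 1
    funext j
    by_cases h : (j : ℕ) = i + 1
    · rw [coordZero, if_pos h, ← hxk]
      exact congrArg x (Fin.ext h).symm
    · simp [coordZero_apply_of_ne _ h, Fin.ext_iff, h]
  · rw [hcoord, nakPairing_congr fun j hj => ?_]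
    · exact hv
    · simp [Fin.ext_iff, show (j : ℕ) ≠ i + 1 by omega]

lemma NakAdmissibleR.nakPairing_nonneg (h : NakAdmissibleR d m) {i : ℕ} (hi : i + 1 < d)
    {x : Fin d → ℝ} (hx : x ∈ nakP d m (i + 1)) : 0 ≤ nakPairing m (i + 1) x :=
  h (i + 2) le_add_self hi x hx

variable (d m) in
def nakLVec (t : Fin (2 * d - 1)) : Fin d → ℝ := fun j => LvecZ d m t j

def nakBasisIndex (k : Fin d) : Fin (2 * d - 1) := Fin.castLE (by omega) k

def nakRowIndex (p : Fin d) : Fin (2 * d - 1) := ⟨d + p - 1, by omega⟩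

lemma nakIndex_cases (t : Fin (2 * d - 1)) :
    (∃ k, t = nakBasisIndex k) ∨ ∃ p : Fin d, 1 ≤ (p : ℕ) ∧ t = nakRowIndex p := by
  by_cases ht : (t : ℕ) < d
  · exact .inl ⟨⟨t, ht⟩, rfl⟩
  · exact .inr ⟨⟨t - d + 1, by omega⟩, by simp, Fin.ext (by simp [nakRowIndex]; omega)⟩

lemma nakLVec_basisIndex (k : Fin d) : nakLVec d m (nakBasisIndex k) = Pi.single k 1 := by
  funext j
  simp only [nakLVec, LvecZ, nakBasisIndex, Fin.val_castLE, k.isLt, if_true, Pi.single_apply,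
    Fin.ext_iff]
  split_ifs with h <;> simp [h]

lemma nakLVec_rowIndex (p : Fin d) (hp : 1 ≤ (p : ℕ)) :
    nakLVec d m (nakRowIndex p) = nakRow d m p - Pi.single p 1 := by
  have hdp : d + p - 1 - d + 1 = p := by omega
  funext j
  simp only [nakLVec, LvecZ, nakRowIndex, if_neg (show ¬d + p - 1 < d by omega), hdp]
  push_cast
  simp [nakRow, Pi.single_apply, Fin.ext_iff]

lemma nakLVec_dotProduct_nonneg (hm : ∀ i j, i < j → m i j = 0) {x : Fin d → ℝ}
    (hx : x ∈ nakP d m d) (t : Fin (2 * d - 1)) : 0 ≤ nakLVec d m t ⬝ᵥ x := by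
  rcases nakIndex_cases t with ⟨k, rfl⟩ | ⟨p, hp, rfl⟩
  · rw [nakLVec_basisIndex, single_dotProduct, one_mul]
    exact nonneg_of_mem_nakP hx k
  · rw [nakLVec_rowIndex p hp, sub_dotProduct, single_dotProduct, one_mul, nakRow_dotProduct hm,
      sub_nonneg]
    exact le_nakPairing_of_mem_nakP hx p hp p.isLt

lemma dotProduct_nonneg_of_mem_hull_nakLVec (hm : ∀ i j, i < j → m i j = 0) {y : Fin d → ℝ}
    (hy : y ∈ PointedCone.hull ℝ (Set.range (nakLVec d m))) {x : Fin d → ℝ}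
    (hx : x ∈ nakP d m d) : 0 ≤ y ⬝ᵥ x := by
  have hle : PointedCone.hull ℝ (Set.range (nakLVec d m)) ≤
      PointedCone.dual (dotProductBilin ℝ ℝ).flip (nakP d m d) :=
    Submodule.span_le.mpr <| Set.range_subset_iff.mpr fun t x hx =>
      nakLVec_dotProduct_nonneg hm hx t
  exact hle hy hx

lemma exists_decomposition_of_nonneg_on_nakP (hm : ∀ i j, i < j → m i j = 0)
    (hadm : NakAdmissibleR d m) {i : ℕ} (hi : i + 1 < d) {y : Fin d → ℝ}
    (hsupp : ∀ j : Fin d, i + 1 < j → y j = 0) (hy : ∀ x ∈ nakP d m (i + 2), 0 ≤ y ⬝ᵥ x) :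
    ∃ y' : Fin d → ℝ, (∀ j : Fin d, i < j → y' j = 0) ∧ (∀ x ∈ nakP d m (i + 1), 0 ≤ y' ⬝ᵥ x) ∧
      ∃ b c : ℝ, 0 ≤ b ∧ 0 ≤ c ∧ y = y' + b • nakLVec d m (nakBasisIndex ⟨i + 1, hi⟩) +
        c • nakLVec d m (nakRowIndex ⟨i + 1, hi⟩) := by
  set k : Fin d := ⟨i + 1, hi⟩
  set c := max (-y k) 0
  refine ⟨y - y k • Pi.single k 1 - c • nakRow d m (i + 1), fun j hj => ?_, fun x hx => ?_,
    max (y k) 0, c, le_max_right _ _, le_max_right _ _, ?_⟩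
  · have hmj : m (i + 1) (j + 1) = 0 := hm _ _ (by omega)
    by_cases h : (j : ℕ) = i + 1
    · rw [show j = k from Fin.ext h] at hmj ⊢
      simp [nakRow, hmj]
    · have hjk : j ≠ k := fun e => h (congrArg Fin.val e)
      simp [nakRow, hmj, hjk, hsupp j (by omega)]
  · have hxk : x k = 0 := apply_eq_zero_of_mem_nakP hx k le_rfl
    set S := nakPairing m (i + 1) x
    have hS : 0 ≤ S := hadm.nakPairing_nonneg hi hx
    obtain ⟨v, hv₀, hvS, hyv⟩ : ∃ v, 0 ≤ v ∧ v ≤ S ∧ y k * v = -(c * S) := by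
      rcases le_total 0 (y k) with h | h
      · exact ⟨0, le_rfl, hS, by simp [c, h]⟩
      · exact ⟨S, hS, le_rfl, by simp [c, h]⟩
    calc 0 ≤ y ⬝ᵥ (x + Pi.single k v) := hy _ (add_single_mem_nakP hi hx hv₀ hvS)
      _ = _ := by
        rw [dotProduct_add, dotProduct_single, hyv, sub_dotProduct, sub_dotProduct,
          smul_dotProduct, smul_dotProduct, single_dotProduct, nakRow_dotProduct hm, hxk]
        ring
  · rw [nakLVec_basisIndex, nakLVec_rowIndex _ (Nat.le_add_left 1 i)]
    have hb : max (y k) 0 = y k + c := by linarith [max_zero_sub_max_neg_zero_eq_self (y k)]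
    rw [hb]
    module

lemma mem_hull_nakLVec_of_nonneg_on_nakP (hm : ∀ i j, i < j → m i j = 0)
    (hadm : NakAdmissibleR d m) :
    ∀ i < d, ∀ y : Fin d → ℝ, (∀ j : Fin d, i < j → y j = 0) →
      (∀ x ∈ nakP d m (i + 1), 0 ≤ y ⬝ᵥ x) → y ∈ PointedCone.hull ℝ (Set.range (nakLVec d m))
  | 0, hd, y, hsupp, hy => by
    set e : Fin d := ⟨0, hd⟩
    have hye : 0 ≤ y e := by
      simpa using hy (Pi.single e 1) (by rw [nakP_one hd]; exact Set.mem_singleton _)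
    have hy_eq : y = y e • nakLVec d m (nakBasisIndex e) := by
      rw [nakLVec_basisIndex]
      funext j
      by_cases h : (j : ℕ) = 0
      · simp [show j = e from Fin.ext h]
      · have hje : j ≠ e := fun h' => h (congrArg Fin.val h')
        simp [hje, hsupp j (by omega)]
    exact hy_eq ▸ PointedCone.smul_mem _ hye (PointedCone.subset_hull ⟨_, rfl⟩)
  | i + 1, hi, y, hsupp, hy => by
    obtain ⟨y', hsupp', hy', b, c, hb, hc, rfl⟩ :=
      exists_decomposition_of_nonneg_on_nakP hm hadm hi hsupp hy
    have hmem := mem_hull_nakLVec_of_nonneg_on_nakP hm hadm i (by omega) y' hsupp' hy'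
    exact add_mem (add_mem hmem (PointedCone.smul_mem _ hb (PointedCone.subset_hull ⟨_, rfl⟩)))
      (PointedCone.smul_mem _ hc (PointedCone.subset_hull ⟨_, rfl⟩))

end Nakajima

theorem stmt14 (d : ℕ) (hd : 3 ≤ d) (m : ℕ → ℕ → ℤ)
    -- lower-triangularity: `m i j = 0` for `j > i` (1-based indices)
    (hm : ∀ i j, i < j → m i j = 0)
    (hadm : NakAdmissibleR d m) :
    -- the dual cone `τ^∨` equals `pos(L)`
    { y : Fin d → ℝ | ∀ z ∈ nakCone d m, 0 ≤ ∑ j : Fin d, y j * z j } =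
      { y : Fin d → ℝ | ∃ a : Fin (2 * d - 1) → ℝ, (∀ i, 0 ≤ a i) ∧
          ∀ j : Fin d, y j = ∑ i : Fin (2 * d - 1), a i * (LvecZ d m i j : ℝ) } := by
  ext y
  refine Iff.trans ?_ (mem_hull_range_iff_exists_nonneg (nakLVec d m) y)
  obtain ⟨n, rfl⟩ : ∃ n, d = n + 1 := ⟨d - 1, by omega⟩
  constructor
  · intro hy
    refine mem_hull_nakLVec_of_nonneg_on_nakP hm hadm n n.lt_succ_self y
      (fun j hj => absurd j.isLt (by omega)) fun x hx => ?_
    exact hy x ⟨1, x, zero_le_one, hx, (one_smul ℝ x).symm⟩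
  · rintro hy _ ⟨r, x, hr, hx, rfl⟩
    change 0 ≤ y ⬝ᵥ (r • x)
    rw [dotProduct_smul, smul_eq_mul]
    exact mul_nonneg hr (dotProduct_nonneg_of_mem_hull_nakLVec hm hy hx)
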